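/- arXiv:1211.4702 — 2 statements merged into one kernel-verified Lean document; each statement's English description precedes it below -/
import Mathlib

section
/- For positive semidefinite real symmetric matrices x and y, one has tr(√(√x · y · √x)) ≤ √(tr x · tr y) ≤ (tr x + tr y)/2. -/
namespace Matrix.PosSemidef

open scoped ComplexOrder

/-- The positive semidefinite square root of a positive semidefinite matrix
(the definition Mathlib had in December 2024, since removed). -/
noncomputable def sqrt {n : Type*} {𝕜 : Type*} [Fintype n] [RCLike 𝕜] [DecidableEq n]
    {A : Matrix n n 𝕜} (hA : A.PosSemidef) : Matrix n n 𝕜 :=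
  hA.1.eigenvectorUnitary.1 * Matrix.diagonal ((↑) ∘ (√·) ∘ hA.1.eigenvalues) *
    (star hA.1.eigenvectorUnitary : Matrix n n 𝕜)

end Matrix.PosSemidef

/-! The inequality is Hölder's inequality `‖C‖₁ ≤ ‖a‖₂ ‖b‖₂` for the trace and Frobenius
norms of `C = a b`, with `a = √x`, `b = √y`, `z = C Cᵀ`. Let `s = √z` and let `p` be the
functional calculus of `t ↦ (√t)⁻¹`; as `0⁻¹ = 0`, this is the pseudo-inverse of `s`, so
`s = p z` and `p z p ≤ 1`. With `W = (p C)ᵀ`, `tr s = tr (p C Cᵀ) = tr (b (W a))`, and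
Cauchy–Schwarz for the Frobenius inner product bounds this by
`√(tr b bᵀ) √(tr aᵀ (Wᵀ W) a) = √(tr b bᵀ) √(tr aᵀ (p z p) a) ≤ √(tr y) √(tr x)`. -/

theorem Real.sqrt_mul_le_add_div_two {a b : ℝ} (ha : 0 ≤ a) (hb : 0 ≤ b) :
    √(a * b) ≤ (a + b) / 2 :=
  Real.sqrt_le_iff.mpr ⟨by positivity, by nlinarith [sq_nonneg (a - b)]⟩

namespace Matrix

open scoped ComplexOrder

variable {l m n 𝕜 : Type*} [Fintype l] [Fintype m] [Fintype n] [RCLike 𝕜]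

theorem trace_mul_le_sqrt_mul_sqrt (A : Matrix m n ℝ) (B : Matrix n m ℝ) :
    (A * B).trace ≤ √(A * Aᴴ).trace * √(Bᴴ * B).trace := by
  simp only [trace, diag, mul_apply, conjTranspose_apply, star_trivial, ← sq]
  simpa only [Fintype.sum_prod_type] using
    Real.sum_mul_le_sqrt_mul_sqrt Finset.univ (fun p : m × n => A p.1 p.2) (fun p => B p.2 p.1)

variable [DecidableEq n]

theorem trace_conjTranspose_mul_mul_le {E : Matrix n n 𝕜} (hE : (1 - E).PosSemidef)
    (A : Matrix n m 𝕜) : (Aᴴ * E * A).trace ≤ (Aᴴ * A).trace := by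
  have h := (hE.conjTranspose_mul_mul_same A).trace_nonneg
  rwa [Matrix.mul_sub, Matrix.sub_mul, Matrix.mul_one, trace_sub, sub_nonneg] at h

theorem PosSemidef.sqrt_eq_cfc {A : Matrix n n 𝕜} (hA : A.PosSemidef) :
    hA.sqrt = cfc Real.sqrt A := by
  rw [hA.1.cfc_eq, IsHermitian.cfc, Unitary.conjStarAlgAut_apply]
  rfl

open scoped MatrixOrder in
theorem PosSemidef.cfc_sqrt_mul_self {A : Matrix n n 𝕜} (hA : A.PosSemidef) :
    cfc Real.sqrt A * cfc Real.sqrt A = A := by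
  rw [← cfcₙ_eq_cfc, ← CFC.sqrt_eq_real_sqrt A hA.nonneg, CFC.sqrt_mul_sqrt_self A hA.nonneg]

theorem cfc_inv_sqrt_mul_self {z : Matrix n n 𝕜} (hz : z.IsHermitian) :
    cfc (fun t => (√t)⁻¹) z * z = cfc Real.sqrt z := by
  have h := cfc_mul (fun t => (√t)⁻¹) (fun t => t) z (z.finite_real_spectrum.continuousOn _)
  rw [cfc_id' ℝ z] at h
  simp only [← h, inv_mul_eq_div, Real.div_sqrt]

open scoped MatrixOrder in
theorem posSemidef_one_sub_cfc_inv_sqrt_mul_mul {z : Matrix n n 𝕜} (hz : z.IsHermitian) :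
    (1 - cfc (fun t => (√t)⁻¹) z * z * cfc (fun t => (√t)⁻¹) z).PosSemidef := by
  have hcont (f : ℝ → ℝ) : ContinuousOn f (spectrum ℝ z) := z.finite_real_spectrum.continuousOn f
  rw [cfc_inv_sqrt_mul_self hz, ← cfc_mul _ _ z (hcont _) (hcont _), ← cfc_one ℝ z,
    ← cfc_sub _ _ z (hcont _) (hcont _)]
  refine nonneg_iff_posSemidef.mp (cfc_nonneg fun t _ => ?_)
  simp only [Pi.one_apply, sub_nonneg]
  exact mul_inv_le_one

theorem trace_cfc_sqrt_mul_mul_conjTranspose_le (A : Matrix n m ℝ) (B : Matrix m l ℝ) :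
    (cfc Real.sqrt (A * B * (A * B)ᴴ)).trace ≤ √(Aᴴ * A).trace * √(B * Bᴴ).trace := by
  set z := A * B * (A * B)ᴴ
  have hz : z.IsHermitian := (posSemidef_self_mul_conjTranspose (A * B)).1
  set p := cfc (fun t => (√t)⁻¹) z
  have hp : pᴴ = p := cfc_predicate (fun t => (√t)⁻¹) z
  set W := Bᴴ * Aᴴ * p
  have hW : Wᴴ * W = p * z * p := by
    simp only [W, z, conjTranspose_mul, conjTranspose_conjTranspose, hp, Matrix.mul_assoc]
  calc (cfc Real.sqrt z).trace = (p * A * (B * Bᴴ * Aᴴ)).trace := by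
        rw [← cfc_inv_sqrt_mul_self hz]
        simp only [p, z, conjTranspose_mul, Matrix.mul_assoc]
    _ = (B * (W * A)).trace := by
        rw [trace_mul_comm]
        simp only [W, Matrix.mul_assoc]
    _ ≤ √(B * Bᴴ).trace * √((W * A)ᴴ * (W * A)).trace := trace_mul_le_sqrt_mul_sqrt _ _
    _ ≤ √(B * Bᴴ).trace * √(Aᴴ * A).trace := by
        gcongr
        rw [conjTranspose_mul, Matrix.mul_assoc, ← Matrix.mul_assoc Wᴴ, hW, ← Matrix.mul_assoc]
        exact trace_conjTranspose_mul_mul_le (posSemidef_one_sub_cfc_inv_sqrt_mul_mul hz) A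
    _ = √(Aᴴ * A).trace * √(B * Bᴴ).trace := mul_comm _ _

end Matrix

/-- For positive semidefinite real symmetric matrices `x, y`:
`tr √(√x · y · √x) ≤ √(tr x · tr y) ≤ (tr x + tr y)/2`. -/
theorem trace_sqrt_conj_le {r : ℕ} (x y : Matrix (Fin r) (Fin r) ℝ)
    (hx : x.PosSemidef) (hy : y.PosSemidef)
    (z : Matrix (Fin r) (Fin r) ℝ) (hz : z.PosSemidef)
    (hzdef : z = hx.sqrt * y * hx.sqrt) :
    hz.sqrt.trace ≤ Real.sqrt (x.trace * y.trace) ∧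
      Real.sqrt (x.trace * y.trace) ≤ (x.trace + y.trace) / 2 := by
  set a := cfc Real.sqrt x
  set b := cfc Real.sqrt y
  have ha : a.conjTranspose = a := cfc_predicate Real.sqrt x
  have hb : b.conjTranspose = b := cfc_predicate Real.sqrt y
  have hz_eq : z = a * b * (a * b).conjTranspose := by
    rw [hzdef, hx.sqrt_eq_cfc, ← hy.cfc_sqrt_mul_self, Matrix.conjTranspose_mul, ha, hb]
    simp only [a, b, Matrix.mul_assoc]
  refine ⟨?_, Real.sqrt_mul_le_add_div_two hx.trace_nonneg hy.trace_nonneg⟩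
  have h := Matrix.trace_cfc_sqrt_mul_mul_conjTranspose_le a b
  rwa [← hz_eq, ← hz.sqrt_eq_cfc, ha, hb, hx.cfc_sqrt_mul_self, hy.cfc_sqrt_mul_self,
    ← Real.sqrt_mul hx.trace_nonneg] at h
end

section
/- Fischer inner product reproducing property in one variable: for every polynomial f ∈ ℂ[z] and every w ∈ ℂ, (1/π) ∫_ℂ f(z) e^{\bar z w} e^{−|z|²} dz = f(w). -/
open MeasureTheory

lemma gauss_half_integrable :
    Integrable (fun z : ℂ => Real.exp (-(1/2) * ‖z‖ ^ 2)) := by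
  have hg : Integrable (fun v : ℂ => Complex.exp (-(1/2 : ℂ) * ‖v‖ ^ 2 + 0 * ((inner ℝ (0:ℂ) v : ℝ) : ℂ))) :=
    GaussianFourier.integrable_cexp_neg_mul_sq_norm_add (by norm_num) 0 0
  have := hg.norm
  refine this.congr (Filter.Eventually.of_forall fun z => ?_)
  have : (-(1/2 : ℂ) * (‖z‖ : ℂ) ^ 2 + 0 * ((inner ℝ (0:ℂ) z : ℝ) : ℂ)) = ((-(1/2) * ‖z‖^2 : ℝ) : ℂ) := by
    push_cast; ring
  show ‖Complex.exp _‖ = _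
  rw [this]
  simp [Complex.norm_exp, ← Complex.ofReal_pow]

lemma integrable_radial (k : ℕ) (c : ℝ) :
    Integrable (fun z : ℂ =>
      ‖z‖ ^ k * Real.exp (c * ‖z‖) * Real.exp (-(‖z‖ ^ 2))) := by
  set C : ℝ := ((4:ℝ) ^ k * k.factorial + 1) * Real.exp (2 * c ^ 2) with hC
  have key : ∀ r : ℝ, 0 ≤ r →
      r ^ k * Real.exp (c * r) * Real.exp (-(r ^ 2)) ≤ C * Real.exp (-(1/2) * r ^ 2) := by
    intro r hr
    have h1 : r ^ k ≤ ((4:ℝ) ^ k * k.factorial + 1) * Real.exp (r ^ 2 / 4) := by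
      have hb : (r^2/4) ^ k / k.factorial ≤ Real.exp (r^2/4) :=
        Real.pow_div_factorial_le_exp _ (by positivity) k
      have hfac : (0:ℝ) < k.factorial := by positivity
      have h2k : r ^ k ≤ r ^ (2*k) + 1 := by
        rcases le_total r 1 with h | h
        · have : r ^ k ≤ 1 := pow_le_one₀ hr h
          nlinarith [pow_nonneg hr (2*k)]
        · have : r ^ k ≤ r ^ (2*k) := pow_le_pow_right₀ h (by omega)
          linarith
      have h3 : r ^ (2*k) ≤ (4:ℝ)^k * k.factorial * Real.exp (r^2/4) := by
        have : r ^ (2*k) = (r^2/4)^k * 4^k := by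
          rw [div_pow, pow_mul]; field_simp
        rw [this]
        calc (r^2/4)^k * 4^k ≤ (Real.exp (r^2/4) * k.factorial) * 4^k := by
              have := (div_le_iff₀ hfac).mp hb
              gcongr
          _ = (4:ℝ)^k * k.factorial * Real.exp (r^2/4) := by ring
      have hexp1 : (1:ℝ) ≤ Real.exp (r^2/4) := Real.one_le_exp (by positivity)
      nlinarith
    have h2 : Real.exp (c * r) ≤ Real.exp (2 * c ^ 2) * Real.exp (r ^ 2 / 4) := by
      rw [← Real.exp_add]
      apply Real.exp_le_exp.mpr
      nlinarith [sq_nonneg (r/2 - c)]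
    calc r ^ k * Real.exp (c * r) * Real.exp (-(r ^ 2))
        ≤ (((4:ℝ) ^ k * k.factorial + 1) * Real.exp (r ^ 2 / 4)) *
            (Real.exp (2 * c ^ 2) * Real.exp (r ^ 2 / 4)) * Real.exp (-(r ^ 2)) := by
          gcongr
      _ = C * (Real.exp (r ^ 2 / 4) * Real.exp (r ^ 2 / 4) * Real.exp (-(r ^ 2))) := by ring
      _ = C * Real.exp (-(1/2) * r ^ 2) := by
          rw [← Real.exp_add, ← Real.exp_add]; congr 1; ring
  refine Integrable.mono' (gauss_half_integrable.const_mul C) ?_ ?_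
  · apply Continuous.aestronglyMeasurable
    have h := continuous_norm (E := ℂ)
    fun_prop
  · refine Filter.Eventually.of_forall fun z => ?_
    have h0 : (0:ℝ) ≤ ‖z‖ := norm_nonneg z
    have := key (‖z‖) h0
    rw [Real.norm_eq_abs, abs_of_nonneg (by positivity)]
    exact this

lemma neg_one_zpow_neg (k : ℤ) : ((-1:ℂ)) ^ (-k) = (-1:ℂ) ^ k := by
  rw [zpow_neg, ← inv_zpow, inv_neg, inv_one]

lemma ortho (m n : ℕ) :
    ∫ z : ℂ, z ^ m * (starRingEnd ℂ) z ^ n * Complex.exp (-((‖z‖ : ℂ) ^ 2)) =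
      if m = n then (Real.pi : ℂ) * n.factorial else 0 := by
  have hpi := Real.pi_pos
  rw [← Complex.integral_comp_polarCoord_symm, polarCoord_target]
  have hset : MeasurableSet (Set.Ioi (0:ℝ) ×ˢ Set.Ioo (-Real.pi) Real.pi) :=
    measurableSet_Ioi.prod measurableSet_Ioo
  set F : ℝ → ℂ := fun x => (x:ℂ) ^ (m+n+1) * Complex.exp (-(x:ℂ)^2) with hFdef
  set G : ℝ → ℂ := fun θ => Complex.exp ((((m:ℂ) - n) * Complex.I) * θ) with hGdef
  have step : ∫ p in Set.Ioi (0:ℝ) ×ˢ Set.Ioo (-Real.pi) Real.pi,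
      p.1 • ((Complex.polarCoord.symm p) ^ m *
        (starRingEnd ℂ) (Complex.polarCoord.symm p) ^ n *
        Complex.exp (-((‖Complex.polarCoord.symm p‖ : ℂ) ^ 2)))
      = ∫ p in Set.Ioi (0:ℝ) ×ˢ Set.Ioo (-Real.pi) Real.pi, F p.1 * G p.2 := by
    refine setIntegral_congr_fun hset fun p hp => ?_
    obtain ⟨hr, hθ⟩ := hp
    have hr' : (0:ℝ) < p.1 := hr
    have hz : Complex.polarCoord.symm p = (p.1 : ℂ) * Complex.exp ((p.2:ℂ) * Complex.I) := by
      rw [Complex.polarCoord_symm_apply, Complex.exp_mul_I]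
      push_cast
      ring
    have habs : ‖Complex.polarCoord.symm p‖ = p.1 := by
      rw [Complex.norm_polarCoord_symm, abs_of_pos hr']
    have hconj : (starRingEnd ℂ) (Complex.polarCoord.symm p)
        = (p.1 : ℂ) * Complex.exp (-((p.2:ℂ) * Complex.I)) := by
      rw [hz, map_mul, Complex.conj_ofReal, ← Complex.exp_conj]
      congr 2
      simp [Complex.conj_ofReal]
    rw [habs, hconj, hz]
    rw [mul_pow, mul_pow, ← Complex.exp_nat_mul, ← Complex.exp_nat_mul]
    have hE : Complex.exp ((m:ℂ) * ((p.2:ℂ) * Complex.I)) *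
        Complex.exp ((n:ℂ) * -((p.2:ℂ) * Complex.I)) = G p.2 := by
      rw [hGdef, ← Complex.exp_add]
      congr 1
      ring
    rw [hFdef]
    simp only [smul_eq_mul, Complex.real_smul]
    rw [← hE]
    push_cast
    ring
  rw [step, Measure.volume_eq_prod, setIntegral_prod_mul]
  by_cases hmn : m = n
  · subst hmn
    have hG1 : ∀ θ : ℝ, G θ = 1 := by
      intro θ; rw [hGdef]; simp
    have hGint : ∫ θ in Set.Ioo (-Real.pi) Real.pi, G θ = ((2 * Real.pi : ℝ) : ℂ) := by
      simp only [hG1]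
      rw [setIntegral_const, measureReal_def, Real.volume_Ioo]
      have h2 : (ENNReal.ofReal (Real.pi - -Real.pi)).toReal = 2 * Real.pi := by
        rw [ENNReal.toReal_ofReal (by linarith)]; ring
      rw [h2, Complex.real_smul, mul_one]
    have hreal : ∫ y in Set.Ioi (0:ℝ), y ^ (((2*m+1:ℕ)):ℝ) * Real.exp (-(y^(2:ℝ)))
        = m.factorial / 2 := by
      rw [integral_rpow_mul_exp_neg_rpow (by norm_num)
        (lt_of_lt_of_le (by norm_num) (Nat.cast_nonneg _))]
      rw [show ((((2*m+1:ℕ)):ℝ)+1)/2 = (m:ℝ)+1 by push_cast; ring]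
      rw [Real.Gamma_nat_eq_factorial]
      ring
    have hFint : ∫ x in Set.Ioi (0:ℝ), F x = ((m.factorial / 2 : ℝ) : ℂ) := by
      have hcast : ∀ x : ℝ, x ∈ Set.Ioi (0:ℝ) →
          F x = ((x ^ (((2*m+1:ℕ)):ℝ) * Real.exp (-(x^(2:ℝ))) : ℝ) : ℂ) := by
        intro x hx
        have hx' : (0:ℝ) < x := hx
        simp only [hFdef]
        rw [Real.rpow_natCast, show ((2:ℝ)) = (((2:ℕ)):ℝ) by norm_num, Real.rpow_natCast]
        push_cast
        try rw [show m + m + 1 = 2*m+1 from by ring]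
        try ring
      rw [setIntegral_congr_fun measurableSet_Ioi hcast, ← hreal]
      exact integral_ofReal
    rw [hGint, hFint]
    rw [if_pos rfl]
    push_cast
    ring
  · have hc : ((m:ℂ) - n) * Complex.I ≠ 0 := by
      apply mul_ne_zero
      · rw [sub_ne_zero]
        exact_mod_cast fun h => hmn (Nat.cast_injective h)
      · exact Complex.I_ne_zero
    have hGzero : ∫ θ in Set.Ioo (-Real.pi) Real.pi, G θ = 0 := by
      rw [hGdef, ← integral_Ioc_eq_integral_Ioo,
        ← intervalIntegral.integral_of_le (by linarith : -Real.pi ≤ Real.pi)]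
      rw [integral_exp_mul_complex hc]
      have key : ∀ k : ℤ, Complex.exp (((k:ℂ)) * Complex.I * (Real.pi:ℂ)) = (-1:ℂ) ^ k := by
        intro k
        rw [show ((k:ℂ)) * Complex.I * (Real.pi:ℂ) = (k:ℂ) * ((Real.pi:ℂ) * Complex.I) by ring]
        rw [Complex.exp_int_mul, Complex.exp_pi_mul_I]
      have h1 : Complex.exp ((((m:ℂ) - n) * Complex.I) * (Real.pi:ℂ)) = (-1:ℂ) ^ ((m:ℤ) - n) := by
        rw [← key ((m:ℤ) - n)]
        norm_num
      have h2 : Complex.exp ((((m:ℂ) - n) * Complex.I) * ((-Real.pi : ℝ):ℂ)) = (-1:ℂ) ^ ((m:ℤ) - n) := by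
        rw [← neg_one_zpow_neg, ← key (-((m:ℤ) - n))]
        push_cast
        ring_nf
      rw [h1, h2]
      simp
    rw [hGzero, mul_zero, if_neg hmn]

lemma exp_term_norm (z : ℂ) : ‖Complex.exp (-((‖z‖ : ℂ) ^ 2))‖
    = Real.exp (-(‖z‖ ^ 2)) := by
  rw [Complex.norm_exp]
  simp [← Complex.ofReal_pow]

lemma mono_int (k : ℕ) (w : ℂ) :
    ∫ z : ℂ, z ^ k * Complex.exp ((starRingEnd ℂ) z * w) *
        Complex.exp (-((‖z‖ : ℂ) ^ 2)) = (Real.pi : ℂ) * w ^ k := by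
  set F : ℕ → ℂ → ℂ := fun n z => (w ^ n / n.factorial) *
    (z ^ k * (starRingEnd ℂ) z ^ n * Complex.exp (-((‖z‖ : ℂ) ^ 2))) with hFdef
  have hFnorm : ∀ n z, ‖F n z‖ = (‖w‖ ^ n / n.factorial) *
      (‖z‖ ^ (k+n) * Real.exp (-(‖z‖ ^ 2))) := by
    intro n z
    simp only [hFdef, norm_mul, norm_div, norm_pow, Complex.norm_conj,
      Complex.norm_natCast, exp_term_norm, pow_add]
    try ring
  have hFint : ∀ n, Integrable (F n) := by
    intro n
    refine Integrable.mono'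
      (((integrable_radial (k+n) 0).const_mul (‖w‖ ^ n / n.factorial))) ?_ ?_
    · apply Continuous.aestronglyMeasurable
      simp only [hFdef]
      continuity
    · refine Filter.Eventually.of_forall fun z => ?_
      rw [hFnorm]
      simp only [zero_mul, Real.exp_zero, mul_one]
      exact le_rfl
  have hsum : Summable fun n => ∫ z, ‖F n z‖ := by
    refine summable_of_sum_range_le (c := ∫ z : ℂ,
      ‖z‖ ^ k * Real.exp (‖w‖ * ‖z‖) *
        Real.exp (-(‖z‖ ^ 2))) (fun n => integral_nonneg fun z => norm_nonneg _) ?_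
    intro N
    rw [← integral_finset_sum _ (fun i _ => (hFint i).norm)]
    refine integral_mono (integrable_finset_sum _ (fun i _ => (hFint i).norm))
      (integrable_radial k (‖w‖)) fun z => ?_
    simp only [hFnorm]
    calc ∑ n ∈ Finset.range N, ‖w‖ ^ n / n.factorial *
          (‖z‖ ^ (k+n) * Real.exp (-(‖z‖ ^ 2)))
        = (‖z‖ ^ k * Real.exp (-(‖z‖ ^ 2))) *
            ∑ n ∈ Finset.range N, (‖w‖ * ‖z‖) ^ n / n.factorial := by
          rw [Finset.mul_sum]
          refine Finset.sum_congr rfl fun i _ => ?_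
          rw [pow_add, mul_pow]
          ring
      _ ≤ (‖z‖ ^ k * Real.exp (-(‖z‖ ^ 2))) *
            Real.exp (‖w‖ * ‖z‖) := by
          exact mul_le_mul_of_nonneg_left
            (Real.sum_le_exp_of_nonneg (by positivity) N) (by positivity)
      _ = ‖z‖ ^ k * Real.exp (‖w‖ * ‖z‖) *
            Real.exp (-(‖z‖ ^ 2)) := by ring
  have hEq : ∀ z : ℂ, (∑' n, F n z) =
      z ^ k * Complex.exp ((starRingEnd ℂ) z * w) *
        Complex.exp (-((‖z‖ : ℂ) ^ 2)) := by
    intro z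
    have hexp : Complex.exp ((starRingEnd ℂ) z * w)
        = ∑' n : ℕ, ((starRingEnd ℂ) z * w) ^ n / n.factorial := by
      rw [Complex.exp_eq_exp_ℂ, NormedSpace.exp_eq_tsum_div]
    rw [hexp, ← tsum_mul_left, ← tsum_mul_right]
    refine tsum_congr fun n => ?_
    simp only [hFdef]
    rw [mul_pow]
    have hfac : ((n.factorial : ℂ)) ≠ 0 := by
      exact_mod_cast Nat.factorial_ne_zero n
    field_simp
  have h1 : ∫ z : ℂ, z ^ k * Complex.exp ((starRingEnd ℂ) z * w) *
      Complex.exp (-((‖z‖ : ℂ) ^ 2)) = ∑' n, ∫ z, F n z := by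
    rw [integral_tsum_of_summable_integral_norm hFint hsum]
    congr 1
    funext z
    exact (hEq z).symm
  rw [h1]
  have h2 : ∀ n, ∫ z, F n z = (w ^ n / n.factorial) *
      (if k = n then (Real.pi : ℂ) * n.factorial else 0) := by
    intro n
    simp only [hFdef]
    rw [integral_const_mul, ortho]
  rw [tsum_eq_single k]
  · rw [h2, if_pos rfl]
    have hfac : ((k.factorial : ℂ)) ≠ 0 := by exact_mod_cast Nat.factorial_ne_zero k
    field_simp
  · intro n hn
    rw [h2, if_neg (fun h => hn (h.symm)), mul_zero]

lemma integrable_term (j : ℕ) (w : ℂ) :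
    Integrable (fun z : ℂ => z ^ j * Complex.exp ((starRingEnd ℂ) z * w) *
      Complex.exp (-((‖z‖ : ℂ) ^ 2))) := by
  refine Integrable.mono' (integrable_radial j (‖w‖)) ?_ ?_
  · apply Continuous.aestronglyMeasurable
    continuity
  · refine Filter.Eventually.of_forall fun z => ?_
    rw [norm_mul, norm_mul]
    simp only [norm_pow, exp_term_norm]
    rw [Complex.norm_exp]
    have h1 : ((starRingEnd ℂ) z * w).re ≤ ‖w‖ * ‖z‖ := by
      calc ((starRingEnd ℂ) z * w).re ≤ ‖(starRingEnd ℂ) z * w‖ := Complex.re_le_norm _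
        _ = ‖w‖ * ‖z‖ := by rw [norm_mul, Complex.norm_conj]; ring
    gcongr

/-- Fischer/Fock reproducing property: for every polynomial `f` and every `w ∈ ℂ`,
`(1/π) ∫_ℂ f(z) e^{z̄ w} e^{−|z|²} dz = f(w)`. -/
theorem fischer_reproducing (f : Polynomial ℂ) (w : ℂ) :
    (1 / (Real.pi : ℂ)) *
        ∫ z : ℂ, f.eval z * Complex.exp ((starRingEnd ℂ) z * w) *
          Complex.exp (-((‖z‖ : ℂ) ^ 2)) = f.eval w := by
  have hpi : (Real.pi : ℂ) ≠ 0 := by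
    exact_mod_cast Real.pi_ne_zero
  have h : ∫ z : ℂ, f.eval z * Complex.exp ((starRingEnd ℂ) z * w) *
      Complex.exp (-((‖z‖ : ℂ) ^ 2)) = (Real.pi : ℂ) * f.eval w := by
    calc ∫ z : ℂ, f.eval z * Complex.exp ((starRingEnd ℂ) z * w) *
          Complex.exp (-((‖z‖ : ℂ) ^ 2))
        = ∫ z : ℂ, ∑ j ∈ Finset.range (f.natDegree + 1), f.coeff j *
            (z ^ j * Complex.exp ((starRingEnd ℂ) z * w) *
              Complex.exp (-((‖z‖ : ℂ) ^ 2))) := by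
          congr 1
          funext z
          rw [Polynomial.eval_eq_sum_range, Finset.sum_mul, Finset.sum_mul]
          refine Finset.sum_congr rfl fun j _ => ?_
          ring
      _ = ∑ j ∈ Finset.range (f.natDegree + 1), f.coeff j *
            ∫ z : ℂ, z ^ j * Complex.exp ((starRingEnd ℂ) z * w) *
              Complex.exp (-((‖z‖ : ℂ) ^ 2)) := by
          rw [integral_finset_sum _ (fun j _ => (integrable_term j w).const_mul _)]
          refine Finset.sum_congr rfl fun j _ => ?_
          rw [integral_const_mul]
      _ = ∑ j ∈ Finset.range (f.natDegree + 1), f.coeff j * ((Real.pi : ℂ) * w ^ j) := by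
          refine Finset.sum_congr rfl fun j _ => ?_
          rw [mono_int]
      _ = (Real.pi : ℂ) * f.eval w := by
          rw [Polynomial.eval_eq_sum_range (p := f) w, Finset.mul_sum]
          refine Finset.sum_congr rfl fun j _ => ?_
          ring
  rw [h, ← mul_assoc, one_div, inv_mul_cancel₀ hpi, one_mul]
end
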